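/- arXiv:2605.27163 — 2 statements merged into one kernel-verified Lean document; each statement's English description precedes it below -/
import Mathlib

section
/- Let y_sco : ℝ^d × U → ℝ be continuous in x and O_s-nondecreasing in x for each u. Suppose for some u' ∈ U and point x̃ we have y_sco(x̃, u') < 0, and suppose the assumption of ambiguity compensation holds: for all x there exists v ∈ ℝ^d with y_sco(x + v, u') ≥ 0. Then the interior of the shifted orthant x̃ + O_s intersects the zero level set {x : y_sco(x, u') = 0}. -/
/-- The orthant `O_s = {x : ∀ i, s i * x i ≥ 0}` for a sign vector `s`. -/
def orthant {d : ℕ} (s : Fin d → ℝ) : Set (Fin d → ℝ) :=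
  {x | ∀ i, 0 ≤ s i * x i}

/-- If `y_sco (·, u')` is continuous and `O_s`-nondecreasing, takes a negative
value at `x̃`, and ambiguity compensation holds for `u'`, then the interior of
the shifted orthant `x̃ + O_s` meets the zero level set of `y_sco (·, u')`. -/
theorem interior_shifted_orthant_meets_zero_set
    {d : ℕ} {U : Type*} (s : Fin d → ℝ) (hs : ∀ i, s i = -1 ∨ s i = 1)
    (ysco : (Fin d → ℝ) → U → ℝ)
    (hcont : ∀ u, Continuous (fun x => ysco x u))
    (hmono : ∀ u, ∀ x y : Fin d → ℝ, (y - x) ∈ orthant s →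
      ysco x u ≤ ysco y u)
    (u' : U) (xt : Fin d → ℝ) (hneg : ysco xt u' < 0)
    (hcomp : ∀ x : Fin d → ℝ, ∃ v : Fin d → ℝ, 0 ≤ ysco (x + v) u') :
    (interior ((fun v => xt + v) '' orthant s) ∩
      {x : Fin d → ℝ | ysco x u' = 0}).Nonempty := by
  obtain ⟨v, hv⟩ := hcomp xt
  have hsq : ∀ i, s i * s i = 1 := by
    intro i; rcases hs i with h | h <;> rw [h] <;> norm_num
  have habs : ∀ i, |s i| = 1 := by
    intro i; rcases hs i with h | h <;> rw [h] <;> norm_num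
  set w : Fin d → ℝ := fun i => s i * (|v i| + 1) with hw
  have hsw : ∀ i, s i * w i = |v i| + 1 := by
    intro i; simp only [hw]; rw [← mul_assoc, hsq i, one_mul]
  -- ysco (xt + w) u' ≥ 0
  have hmono1 : ysco (xt + v) u' ≤ ysco (xt + w) u' := by
    apply hmono u'
    intro i
    have h1 : s i * v i ≤ |v i| := by
      calc s i * v i ≤ |s i * v i| := le_abs_self _
        _ = |v i| := by rw [abs_mul, habs i, one_mul]
    have : s i * ((xt + w - (xt + v)) i) = (|v i| + 1) - s i * v i := by
      simp [mul_sub, hsw i]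
    rw [this]
    linarith
  have hw1 : 0 ≤ ysco (xt + w) u' := le_trans hv hmono1
  -- IVT on f t = ysco (xt + t • w) u'
  set f : ℝ → ℝ := fun t => ysco (xt + t • w) u' with hf
  have hfc : Continuous f :=
    (hcont u').comp (continuous_const.add (continuous_id.smul continuous_const))
  have hf0 : f 0 = ysco xt u' := by simp [hf]
  have hf1 : f 1 = ysco (xt + w) u' := by simp [hf]
  have hsub : Set.Icc (f 0) (f 1) ⊆ f '' Set.Icc 0 1 :=
    intermediate_value_Icc (by norm_num) hfc.continuousOn
  have h0mem : (0 : ℝ) ∈ Set.Icc (f 0) (f 1) := by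
    constructor
    · rw [hf0]; exact hneg.le
    · rw [hf1]; exact hw1
  obtain ⟨t, htI, hft⟩ := hsub h0mem
  have htpos : 0 < t := by
    rcases lt_or_eq_of_le htI.1 with h | h
    · exact h
    · exfalso; rw [← h] at hft; rw [hf0] at hft; exact absurd hft hneg.ne
  refine ⟨xt + t • w, ?_, ?_⟩
  · -- interior membership
    have hopen : IsOpen {x : Fin d → ℝ | ∀ i, 0 < s i * (x i - xt i)} := by
      have : {x : Fin d → ℝ | ∀ i, 0 < s i * (x i - xt i)} =
          ⋂ i, {x : Fin d → ℝ | 0 < s i * (x i - xt i)} := by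
        ext x; simp
      rw [this]
      apply isOpen_iInter_of_finite
      intro i
      have : Continuous fun x : Fin d → ℝ => s i * (x i - xt i) :=
        continuous_const.mul ((continuous_apply i).sub continuous_const)
      exact isOpen_lt continuous_const this
    have hsubset : {x : Fin d → ℝ | ∀ i, 0 < s i * (x i - xt i)} ⊆
        (fun v => xt + v) '' orthant s := by
      intro x hx
      refine ⟨x - xt, fun i => (hx i).le, by simp⟩
    apply interior_maximal hsubset hopen
    intro i
    have : s i * ((xt + t • w) i - xt i) = t * (s i * w i) := by
      simp [mul_comm]; ring
    rw [this, hsw i]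
    positivity
  · exact hft
end

section
/- For δ > 0, the causal loss ℓ_caus(δ) = 2(1/2 - δ) equals the spurious loss ℓ_spur(δ) evaluated at its optimizer a = -√(1/12 - δ²/2), b = δ - 1/6, if and only if δ = 1/3 (within the range where both are defined, δ ∈ (0.2, √(1/6))). Moreover ℓ_caus(δ) < ℓ_spur(δ) for δ > 1/3 in this range. -/
/-- The spurious classifier's post-adaptation 0-1 loss as a function of the
classifier parameters `(a, b)`, for adaptation budget `δ`. -/
noncomputable def lossSpurAB (δ a b : ℝ) : ℝ :=
  (1 / 4) * ((b - a - δ) * (1 + (δ - b) / a)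
    + (1 / 2 + δ - b) * ((-(1 / 2) + δ - b) / a)
    + (1 + b / a) * (2 * δ - b - a))

/-- The spurious loss evaluated at its optimizer. -/
noncomputable def lossSpur (δ : ℝ) : ℝ :=
  lossSpurAB δ (-Real.sqrt (1 / 12 - δ ^ 2 / 2)) (δ - 1 / 6)

/-- The causal classifier's post-adaptation loss. -/
noncomputable def lossCaus (δ : ℝ) : ℝ := 2 * (1 / 2 - δ)

private lemma pos_right_aux (x y : ℝ) (hx : 0 < x) (h : 0 < x * y) : 0 < y := by
  by_contra h'
  push_neg at h'
  nlinarith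

/-- For `δ ∈ (0.2, √(1/6))`, the causal and (optimized) spurious losses agree
iff `δ = 1/3`, and for `δ > 1/3` the causal loss is strictly smaller. -/
theorem lossCaus_eq_lossSpur_iff (δ : ℝ)
    (hδ : δ ∈ Set.Ioo (0.2 : ℝ) (Real.sqrt (1 / 6))) :
    (lossCaus δ = lossSpur δ ↔ δ = 1 / 3) ∧
    (1 / 3 < δ → lossCaus δ < lossSpur δ) := by
  obtain ⟨h1, h2⟩ := hδ
  have hδ0 : (0:ℝ) < δ := by linarith [(by norm_num : (0:ℝ) < 0.2)]
  have hδsq : δ ^ 2 < 1 / 6 := by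
    have := (Real.lt_sqrt hδ0.le).mp h2
    linarith
  have hδhalf : δ < 1 / 2 := by
    have : Real.sqrt (1 / 6) < 1 / 2 := by
      rw [show (1:ℝ)/2 = Real.sqrt ((1/2)^2) by rw [Real.sqrt_sq]; norm_num]
      exact Real.sqrt_lt_sqrt (by norm_num) (by norm_num)
    linarith
  set s : ℝ := Real.sqrt (1 / 12 - δ ^ 2 / 2) with hs_def
  have harg : (0:ℝ) < 1 / 12 - δ ^ 2 / 2 := by linarith
  have hs0 : 0 < s := Real.sqrt_pos.mpr harg
  have hs2 : s ^ 2 = 1 / 12 - δ ^ 2 / 2 := Real.sq_sqrt harg.le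
  have hsne : s ≠ 0 := hs0.ne'
  -- key identity
  have hX : 36 * s * (lossSpur δ - lossCaus δ)
      = (4 - 18 * δ ^ 2) - 36 * s * (1 - 2 * δ) := by
    unfold lossSpur lossSpurAB lossCaus
    rw [← hs_def]
    field_simp
    ring_nf
    linear_combination (10368:ℝ) * hs2
  have hq : 0 < 972 * δ ^ 3 - 540 * δ ^ 2 - 156 * δ + 92 := by
    have ht : 0 < 1 / 6 - δ ^ 2 := by linarith
    have h54 : 0 < 540 - 972 * δ := by linarith
    nlinarith [mul_pos ht h54]
  have hY : 0 < (4 - 18 * δ ^ 2) + 36 * s * (1 - 2 * δ) := by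
    have h12 : 0 < 1 - 2 * δ := by linarith
    have := mul_pos (mul_pos (by norm_num : (0:ℝ) < 36) hs0) h12
    nlinarith
  have hXY : ((4 - 18 * δ ^ 2) - 36 * s * (1 - 2 * δ))
      * ((4 - 18 * δ ^ 2) + 36 * s * (1 - 2 * δ))
      = (3 * δ - 1) * (972 * δ ^ 3 - 540 * δ ^ 2 - 156 * δ + 92) := by
    have h : (36 * s * (1 - 2 * δ)) ^ 2 = 1296 * (1/12 - δ^2/2) * (1 - 2*δ)^2 := by
      rw [mul_pow, mul_pow, hs2]; ring
    nlinarith [h]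
  constructor
  · constructor
    · intro hEq
      have hX0 : 36 * s * (lossSpur δ - lossCaus δ) = 0 := by rw [hEq]; ring
      have h0 : (3 * δ - 1) * (972 * δ ^ 3 - 540 * δ ^ 2 - 156 * δ + 92) = 0 := by
        rw [← hXY, ← hX, hX0]; ring
      rcases mul_eq_zero.mp h0 with h | h
      · linarith
      · exact absurd h (by linarith)
    · intro hEq
      have h31 : 3 * δ - 1 = 0 := by rw [hEq]; norm_num
      have h0 : ((4 - 18 * δ ^ 2) - 36 * s * (1 - 2 * δ))
          * ((4 - 18 * δ ^ 2) + 36 * s * (1 - 2 * δ)) = 0 := by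
        rw [hXY, h31]; ring
      have hX0 : (4 - 18 * δ ^ 2) - 36 * s * (1 - 2 * δ) = 0 :=
        (mul_eq_zero.mp h0).resolve_right hY.ne'
      have h36 : (0:ℝ) < 36 * s := by linarith
      have hz : 36 * s * (lossSpur δ - lossCaus δ) = 0 := by rw [hX, hX0]
      have := (mul_eq_zero.mp hz).resolve_left h36.ne'
      linarith
  · intro hlt
    have hpos : 0 < (3 * δ - 1) * (972 * δ ^ 3 - 540 * δ ^ 2 - 156 * δ + 92) :=
      mul_pos (by linarith) hq
    rw [← hXY] at hpos
    have hXpos : 0 < (4 - 18 * δ ^ 2) - 36 * s * (1 - 2 * δ) := by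
      by_contra h'
      push_neg at h'
      nlinarith
    rw [← hX] at hXpos
    have := pos_right_aux (36 * s) _ (by linarith) hXpos
    linarith
end
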